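/- Let K ⊆ F be a field extension with K algebraically closed, and let A, B be K-algebras of the same dimension ω with |K| > ω. Then A ⊗_K F ≅ B ⊗_K F as F-algebras if and only if A ≅ B as K-algebras. -/

import Mathlib

/-!
The entries of the matrices of an `F`-isomorphism `e : F ⊗ A ≃ F ⊗ B` and of its inverse, in
the base changes of `K`-bases of `A` and `B`, are fewer than `#K` elements of `F`; the
`K`-subalgebra `R` they generate therefore has a `K`-point `π : R →ₐ[K] K` (a residue field of
`R` is generated by fewer than `#K` elements, hence algebraic over `K`, hence `K` itself).
Extending `π` `K`-linearly to `F` and applying it to the `F`-coefficients turns `e` and `e⁻¹`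
into mutually inverse multiplicative `K`-linear maps: on the `R`-lattices `R ⊗ A` and `R ⊗ B`,
which `e` and `e⁻¹` preserve, this contraction is multiplicative and `R`-semilinear along `π`.
-/

universe u

open TensorProduct Cardinal

theorem Algebra.IsAlgebraic.of_rank_lt_mk {K L : Type u} [Field K] [Field L] [Algebra K L]
    (h : Module.rank K L < #K) : Algebra.IsAlgebraic K L :=
  ⟨fun _ => by_contra fun hx =>
    (Transcendental.linearIndependent_sub_inv hx).cardinal_le_rank.not_gt h⟩

theorem Algebra.IsAlgebraic.of_surjective_mvPolynomial {K L σ : Type u} [Field K] [Field L]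
    [Algebra K L] (θ : MvPolynomial σ K →ₐ[K] L) (hθ : Function.Surjective θ) (hσ : #σ < #K) :
    Algebra.IsAlgebraic K L := by
  cases finite_or_infinite σ
  · have : Algebra.FiniteType K L := .of_surjective θ hθ
    have := finite_of_finite_type_of_isJacobsonRing K L
    exact Algebra.IsAlgebraic.of_finite K L
  · refine .of_rank_lt_mk ((LinearMap.rank_le_of_surjective θ.toLinearMap hθ).trans_lt ?_)
    rwa [MvPolynomial.rank_eq, mk_finsupp_nat, max_eq_left (aleph0_le_mk σ)]

theorem nonempty_algHom_of_surjective_mvPolynomial {K R σ : Type u} [Field K] [IsAlgClosed K]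
    [CommRing R] [Nontrivial R] [Algebra K R] (θ : MvPolynomial σ K →ₐ[K] R)
    (hθ : Function.Surjective θ) (hσ : #σ < #K) : Nonempty (R →ₐ[K] K) := by
  obtain ⟨m, hm⟩ := Ideal.exists_maximal R
  let := Ideal.Quotient.field m
  have := Algebra.IsAlgebraic.of_surjective_mvPolynomial ((Ideal.Quotient.mkₐ K m).comp θ)
    ((Ideal.Quotient.mkₐ_surjective K m).comp hθ) hσ
  exact ⟨IsAlgClosed.lift.comp (Ideal.Quotient.mkₐ K m)⟩

theorem nonempty_algHom_adjoin_of_mk_lt {K F : Type u} [Field K] [IsAlgClosed K] [CommRing F]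
    [Nontrivial F] [Algebra K F] {S : Set F} (hS : #S < #K) :
    Nonempty (Algebra.adjoin K S →ₐ[K] K) := by
  let T : Set (Algebra.adjoin K S) := Subtype.val ⁻¹' S
  refine nonempty_algHom_of_surjective_mvPolynomial (MvPolynomial.aeval ((↑) : T → _)) ?_
    ((mk_preimage_of_injective _ _ Subtype.val_injective).trans_lt hS)
  rw [← AlgHom.range_eq_top, ← Algebra.adjoin_range_eq_range_aeval, Subtype.range_coe]
  exact Algebra.adjoin_adjoin_coe_preimage

theorem LinearEquiv.baseChange_map_mul {K F A B : Type*} [CommSemiring K] [CommSemiring F]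
    [Algebra K F]
    [NonUnitalNonAssocSemiring A] [Module K A] [SMulCommClass K A A] [IsScalarTower K A A]
    [NonUnitalNonAssocSemiring B] [Module K B] [SMulCommClass K B B] [IsScalarTower K B B]
    (f : A ≃ₗ[K] B) (hf : ∀ a b, f (a * b) = f a * f b) (x y : F ⊗[K] A) :
    f.baseChange K F A B (x * y) = f.baseChange K F A B x * f.baseChange K F A B y := by
  induction x using TensorProduct.induction_on with
  | zero => simp
  | add u v hu hv => rw [add_mul, map_add, map_add, add_mul, hu, hv]
  | tmul s a =>
    induction y using TensorProduct.induction_on with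
    | zero => simp
    | add u v hu hv => rw [mul_add, map_add, map_add, mul_add, hu, hv]
    | tmul t b =>
      simp only [Algebra.TensorProduct.tmul_mul_tmul, LinearEquiv.baseChange_tmul, hf]

namespace Specialization

variable {K F : Type*} [Field K] [CommRing F] [Algebra K F] {R : Subalgebra K F}

noncomputable def extend (π : R →ₐ[K] K) : F →ₗ[K] K :=
  (LinearMap.exists_extend (p := Subalgebra.toSubmodule R) π.toLinearMap).choose

theorem extend_apply_of_mem (π : R →ₐ[K] K) {x : F} (hx : x ∈ R) : extend π x = π ⟨x, hx⟩ :=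
  LinearMap.congr_fun
    (LinearMap.exists_extend (p := Subalgebra.toSubmodule R) π.toLinearMap).choose_spec ⟨x, hx⟩

section Module

variable (A : Type*) {B C : Type*} [AddCommMonoid A] [Module K A] [AddCommMonoid B] [Module K B]
  [AddCommMonoid C] [Module K C]

variable (R) in
/-- The image of `R ⊗[K] A` in `F ⊗[K] A`. -/
def lattice : Submodule K (F ⊗[K] A) :=
  Submodule.span K (Set.image2 (· ⊗ₜ ·) R Set.univ)

noncomputable def contract (π : R →ₐ[K] K) : F ⊗[K] A →ₗ[K] A :=
  TensorProduct.lift ((LinearMap.lsmul K A).comp (extend π))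

variable {A} (π : R →ₐ[K] K)

@[simp]
theorem contract_tmul (x : F) (a : A) : contract A π (x ⊗ₜ a) = extend π x • a := rfl

theorem tmul_mem_lattice {x : F} (hx : x ∈ R) (a : A) : x ⊗ₜ[K] a ∈ lattice R A :=
  Submodule.subset_span ⟨x, hx, a, trivial, rfl⟩

theorem contract_one_tmul (a : A) : contract A π (1 ⊗ₜ a) = a := by
  rw [contract_tmul, extend_apply_of_mem π (one_mem R)]
  exact (congrArg (· • a) (map_one π)).trans (one_smul K a)

theorem contract_smul {x : F} (hx : x ∈ R) {v : F ⊗[K] A} (hv : v ∈ lattice R A) :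
    contract A π (x • v) = π ⟨x, hx⟩ • contract A π v := by
  induction hv using Submodule.span_induction with
  | mem _ h =>
    obtain ⟨y, hy, a, -, rfl⟩ := h
    rw [smul_tmul', smul_eq_mul, contract_tmul, contract_tmul,
      extend_apply_of_mem π (mul_mem hx hy), extend_apply_of_mem π hy, ← mul_smul, ← map_mul]
    rfl
  | zero => simp
  | add u v _ _ hu hv => rw [smul_add, map_add, map_add, smul_add, hu, hv]
  | smul k u _ hu =>
    rw [smul_comm x k u, LinearMap.map_smul, LinearMap.map_smul, hu, smul_comm]

variable (R) in
def MapsLattice (φ : F ⊗[K] A →ₗ[F] F ⊗[K] B) : Prop :=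
  ∀ a : A, φ (1 ⊗ₜ a) ∈ lattice R B

noncomputable def specialize (φ : F ⊗[K] A →ₗ[F] F ⊗[K] B) : A →ₗ[K] B :=
  contract B π ∘ₗ φ.restrictScalars K ∘ₗ TensorProduct.mk K F A 1

theorem specialize_apply (φ : F ⊗[K] A →ₗ[F] F ⊗[K] B) (a : A) :
    specialize π φ a = contract B π (φ (1 ⊗ₜ a)) := rfl

theorem contract_map_one_tmul_contract {ψ : F ⊗[K] B →ₗ[F] F ⊗[K] C} (hψ : MapsLattice R ψ)
    {u : F ⊗[K] B} (hu : u ∈ lattice R B) :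
    contract C π (ψ (1 ⊗ₜ contract B π u)) = contract C π (ψ u) := by
  induction hu using Submodule.span_induction with
  | mem _ h =>
    obtain ⟨x, hx, b, -, rfl⟩ := h
    dsimp only
    have hxb : x ⊗ₜ[K] b = x • (1 : F) ⊗ₜ[K] b := by rw [smul_tmul', smul_eq_mul, mul_one]
    rw [contract_tmul, tmul_smul, ψ.map_smul_of_tower, LinearMap.map_smul, hxb, ψ.map_smul,
      contract_smul π hx (hψ b), extend_apply_of_mem π hx]
  | zero => simp
  | add u v _ _ hu hv => rw [map_add, tmul_add, map_add, map_add, map_add, map_add, hu, hv]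
  | smul k u _ hu =>
    rw [LinearMap.map_smul, tmul_smul, ψ.map_smul_of_tower, LinearMap.map_smul,
      ψ.map_smul_of_tower, LinearMap.map_smul, hu]

theorem specialize_comp {φ : F ⊗[K] A →ₗ[F] F ⊗[K] B} {ψ : F ⊗[K] B →ₗ[F] F ⊗[K] C}
    (hφ : MapsLattice R φ) (hψ : MapsLattice R ψ) :
    specialize π (ψ ∘ₗ φ) = specialize π ψ ∘ₗ specialize π φ :=
  LinearMap.ext fun a => (contract_map_one_tmul_contract π hψ (hφ a)).symm

theorem specialize_id : specialize π (LinearMap.id : F ⊗[K] A →ₗ[F] F ⊗[K] A) = LinearMap.id :=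
  LinearMap.ext (contract_one_tmul π)

noncomputable def specializeEquiv (e : F ⊗[K] A ≃ₗ[F] F ⊗[K] B) (he : MapsLattice R e.toLinearMap)
    (he' : MapsLattice R e.symm.toLinearMap) : A ≃ₗ[K] B :=
  .ofLinearMap (f := specialize π e.toLinearMap) (g := specialize π e.symm.toLinearMap)
    (by rw [← specialize_comp π he' he, e.comp_symm, specialize_id])
    (by rw [← specialize_comp π he he', e.symm_comp, specialize_id])

theorem mem_lattice_of_repr_mem {J : Type*} (ℬ : Module.Basis J K B) {v : F ⊗[K] B}
    (h : ∀ j, (ℬ.baseChange F).repr v j ∈ R) : v ∈ lattice R B := by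
  rw [← (ℬ.baseChange F).linearCombination_repr v, Finsupp.linearCombination_apply]
  refine Submodule.sum_mem _ fun j _ => ?_
  dsimp only
  rw [Module.Basis.baseChange_apply, smul_tmul', smul_eq_mul, mul_one]
  exact tmul_mem_lattice (h j) _

def coeffs {I J : Type*} (𝒜 : Module.Basis I K A) (ℬ : Module.Basis J K B)
    (φ : F ⊗[K] A →ₗ[F] F ⊗[K] B) : Set F :=
  Set.range fun ij : I × J => (ℬ.baseChange F).repr (φ (1 ⊗ₜ 𝒜 ij.1)) ij.2

theorem mapsLattice_of_coeffs_subset {I J : Type*} (𝒜 : Module.Basis I K A)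
    (ℬ : Module.Basis J K B) {φ : F ⊗[K] A →ₗ[F] F ⊗[K] B} (h : coeffs 𝒜 ℬ φ ⊆ R) :
    MapsLattice R φ := by
  suffices ⊤ ≤ (lattice R B).comap (φ.restrictScalars K ∘ₗ TensorProduct.mk K F A 1) from
    fun a => this trivial
  rw [← 𝒜.span_eq, Submodule.span_le]
  rintro _ ⟨i, rfl⟩
  exact mem_lattice_of_repr_mem ℬ fun j => h ⟨(i, j), rfl⟩

end Module

section Algebra

variable {A B : Type*}
  [NonUnitalNonAssocSemiring A] [Module K A] [SMulCommClass K A A] [IsScalarTower K A A]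
  [NonUnitalNonAssocSemiring B] [Module K B] [SMulCommClass K B B] [IsScalarTower K B B]
  (π : R →ₐ[K] K)

theorem contract_mul {u v : F ⊗[K] A} (hu : u ∈ lattice R A) (hv : v ∈ lattice R A) :
    contract A π (u * v) = contract A π u * contract A π v := by
  induction hu using Submodule.span_induction with
  | mem _ h =>
    obtain ⟨x, hx, a, -, rfl⟩ := h
    induction hv using Submodule.span_induction with
    | mem _ h =>
      obtain ⟨y, hy, b, -, rfl⟩ := h
      dsimp only
      rw [Algebra.TensorProduct.tmul_mul_tmul, contract_tmul, contract_tmul, contract_tmul,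
        extend_apply_of_mem π (mul_mem hx hy), extend_apply_of_mem π hx,
        extend_apply_of_mem π hy, smul_mul_smul_comm, ← map_mul]
      rfl
    | zero => simp
    | add v w _ _ hv hw => rw [mul_add, map_add, map_add, mul_add, hv, hw]
    | smul k v _ hv =>
      rw [mul_smul_comm, LinearMap.map_smul, LinearMap.map_smul, hv, mul_smul_comm]
  | zero => simp
  | add u w _ _ hu hw => rw [add_mul, map_add, map_add, add_mul, hu, hw]
  | smul k u _ hu =>
    rw [smul_mul_assoc, LinearMap.map_smul, LinearMap.map_smul, hu, smul_mul_assoc]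

theorem specialize_map_mul {φ : F ⊗[K] A →ₗ[F] F ⊗[K] B} (hφ : MapsLattice R φ)
    (hmul : ∀ x y, φ (x * y) = φ x * φ y) (a b : A) :
    specialize π φ (a * b) = specialize π φ a * specialize π φ b := by
  rw [specialize_apply, specialize_apply, specialize_apply, ← contract_mul π (hφ a) (hφ b),
    ← hmul, Algebra.TensorProduct.tmul_mul_tmul, one_mul]

end Algebra

end Specialization

open Specialization in
theorem stmt16 (K F : Type u) [Field K] [IsAlgClosed K] [Field F] [Algebra K F]
    (A B : Type u)
    [NonUnitalNonAssocRing A] [Module K A] [SMulCommClass K A A] [IsScalarTower K A A]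
    [NonUnitalNonAssocRing B] [Module K B] [SMulCommClass K B B] [IsScalarTower K B B]
    (ω : Cardinal.{u}) (hA : Module.rank K A = ω) (hB : Module.rank K B = ω)
    (hK : ω < Cardinal.mk K) :
    (∃ e : (F ⊗[K] A) ≃ₗ[F] (F ⊗[K] B), ∀ x y, e (x * y) = e x * e y) ↔
      ∃ f : A ≃ₗ[K] B, ∀ x y, f (x * y) = f x * f y := by
  refine ⟨fun ⟨e, he⟩ => ?_, fun ⟨f, hf⟩ => ⟨f.baseChange K F A B, f.baseChange_map_mul hf⟩⟩
  let 𝒜 := Module.Free.chooseBasis K A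
  let ℬ := Module.Free.chooseBasis K B
  have hI : #(Module.Free.ChooseBasisIndex K A) = ω :=
    (Module.Free.rank_eq_card_chooseBasisIndex K A).symm.trans hA
  have hJ : #(Module.Free.ChooseBasisIndex K B) = ω :=
    (Module.Free.rank_eq_card_chooseBasisIndex K B).symm.trans hB
  let S := coeffs 𝒜 ℬ e.toLinearMap ∪ coeffs ℬ 𝒜 e.symm.toLinearMap
  have hS : #S < #K := by
    have hωω : ω * ω < #K := mul_lt_of_lt (aleph0_le_mk K) hK hK
    calc #S ≤ #(_ × _) + #(_ × _) := (mk_union_le _ _).trans (add_le_add mk_range_le mk_range_le)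
      _ = ω * ω + ω * ω := by simp only [mk_prod, lift_id, hI, hJ]
      _ < #K := add_lt_of_lt (aleph0_le_mk K) hωω hωω
  obtain ⟨π⟩ := nonempty_algHom_adjoin_of_mk_lt hS
  have he_lattice : MapsLattice (Algebra.adjoin K S) e.toLinearMap :=
    mapsLattice_of_coeffs_subset 𝒜 ℬ (Set.subset_union_left.trans Algebra.subset_adjoin)
  have he_symm_lattice : MapsLattice (Algebra.adjoin K S) e.symm.toLinearMap :=
    mapsLattice_of_coeffs_subset ℬ 𝒜 (Set.subset_union_right.trans Algebra.subset_adjoin)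
  exact ⟨specializeEquiv π e he_lattice he_symm_lattice, specialize_map_mul π he_lattice he⟩
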